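/- arXiv:2603.14510 — 10 statements merged into one kernel-verified Lean document; each statement's English description precedes it below -/
import Mathlib

section
/- If A is a set of nonnegative integers and (A_q) is a decreasing sequence of sets of nonnegative integers with A equal to the intersection of all A_q, then for every positive integer h, the h-fold sumset hA equals the intersection over q of the h-fold sumsets hA_q. -/
open Pointwise

/-- The `h`-fold sumset: all sums of `h` not necessarily distinct elements of `S`
(for `h ≥ 1`; by convention `hfold 0 S = S`). -/
def hfold {α : Type*} [Add α] : ℕ → Set α → Set α
  | 0, S => S
  | 1, S => S
  | n + 2, S => hfold (n + 1) S + S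

lemma mem_hfold (S : Set ℕ) : ∀ h : ℕ, 1 ≤ h → ∀ x : ℕ,
    (x ∈ hfold h S ↔ ∃ f : Fin h → ℕ, (∀ i, f i ∈ S) ∧ ∑ i, f i = x) := by
  intro h
  induction h with
  | zero => intro hh; omega
  | succ n ih =>
    intro _ x
    match n with
    | 0 =>
      simp only [hfold]
      constructor
      · intro hx
        exact ⟨fun _ => x, fun _ => hx, by simp⟩
      · rintro ⟨f, hf, hsum⟩
        have : f 0 = x := by simpa using hsum
        exact this ▸ hf 0
    | m + 1 =>
      show x ∈ hfold (m + 1) S + S ↔ _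
      rw [Set.mem_add]
      constructor
      · rintro ⟨y, hy, z, hz, hyz⟩
        obtain ⟨g, hg, hgsum⟩ := (ih (by omega) y).1 hy
        refine ⟨Fin.snoc g z, ?_, ?_⟩
        · intro i
          refine Fin.lastCases ?_ (fun j => ?_) i
          · simpa using hz
          · simpa using hg j
        · rw [Fin.sum_univ_castSucc]
          simp [hgsum, hyz]
      · rintro ⟨f, hf, hsum⟩
        refine ⟨∑ i : Fin (m + 1), f i.castSucc, ?_, f (Fin.last _), hf _, ?_⟩
        · exact (ih (by omega) _).2 ⟨fun i => f i.castSucc, fun i => hf _, rfl⟩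
        · exact (Fin.sum_univ_castSucc f).symm.trans hsum

theorem stmt0 (A : Set ℕ) (Aq : ℕ → Set ℕ)
    (hdec : ∀ q, Aq (q + 1) ⊆ Aq q)
    (hA : A = ⋂ q, Aq q) :
    ∀ h : ℕ, 1 ≤ h → hfold h A = ⋂ q, hfold h (Aq q) := by
  intro h hh
  have hanti : ∀ q q' : ℕ, q ≤ q' → Aq q' ⊆ Aq q := by
    intro q q' hq
    exact antitone_nat_of_succ_le (f := Aq) (fun n => hdec n) hq
  ext x
  rw [mem_hfold A h hh x, Set.mem_iInter]
  constructor
  · rintro ⟨f, hf, hsum⟩ q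
    rw [mem_hfold _ h hh x]
    refine ⟨f, fun i => ?_, hsum⟩
    have := hf i
    rw [hA, Set.mem_iInter] at this
    exact this q
  · intro hx
    choose f hf hfsum using fun q => (mem_hfold _ h hh x).1 (hx q)
    have hle : ∀ q i, f q i ≤ x := by
      intro q i
      rw [← hfsum q]
      exact Finset.single_le_sum (fun j _ => Nat.zero_le _) (Finset.mem_univ i)
    set g : ℕ → (Fin h → Fin (x + 1)) :=
      fun q i => ⟨f q i, Nat.lt_succ_of_le (hle q i)⟩ with hg
    obtain ⟨t, ht⟩ := Finite.exists_infinite_fiber g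
    have htinf : (g ⁻¹' {t}).Infinite := Set.infinite_coe_iff.1 ht
    have key : ∀ q, ∃ q' ≥ q, g q' = t := by
      intro q
      obtain ⟨q', hq', hgt⟩ := htinf.exists_gt q
      exact ⟨q', le_of_lt hgt, hq'⟩
    refine ⟨fun i => (t i : ℕ), fun i => ?_, ?_⟩
    · show (t i : ℕ) ∈ A
      rw [hA, Set.mem_iInter]
      intro q
      obtain ⟨q', hq, hq'⟩ := key q
      have heq : f q' i = (t i : ℕ) := by rw [← hq']
      rw [← heq]
      exact hanti q q' hq (hf q' i)
    · show ∑ i, ((t i : ℕ)) = x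
      obtain ⟨q', _, hq'⟩ := key 0
      have heq : ∀ i, (t i : ℕ) = f q' i := fun i => by rw [← hq']
      rw [Finset.sum_congr rfl (fun i _ => heq i)]
      exact hfsum q'
end

section
/- Let h ≥ 1 and let X be an additive commutative semigroup such that every element of X has only finitely many representations as an ordered sum of h elements of X. If (A_q) is a decreasing sequence of subsets of X with intersection A, then hA equals the intersection over q of hA_q. -/
open Pointwise

/-- The sum of an ordered `(n+1)`-tuple in an additive semigroup. -/
def tupSum {α : Type*} [Add α] : (n : ℕ) → (Fin (n + 1) → α) → α
  | 0, f => f 0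
  | n + 1, f => tupSum n (fun i => f i.castSucc) + f (Fin.last (n + 1))

/-! Every `x` in `⋂ q, h A_q` has a nonempty, finite set of representations by `h`-tuples from
`A_q`, decreasing in `q`. Such a sequence of finite sets stabilises, so some tuple represents `x`
over every `A_q`, hence over `A = ⋂ q, A_q`. -/

open Set

theorem Set.nonempty_iInter_of_antitone_of_finite {β : Type*} {s : ℕ → Set β} (hs : Antitone s)
    (h0 : (s 0).Finite) (hne : ∀ q, (s q).Nonempty) : (⋂ q, s q).Nonempty := by
  have hrange : (range s).Finite :=
    h0.finite_subsets.subset (range_subset_iff.2 fun q => hs (Nat.zero_le q))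
  obtain ⟨_, ⟨q₀, rfl⟩, hmin⟩ := hrange.exists_minimal (range_nonempty s)
  refine (hne q₀).mono (subset_iInter fun q => ?_)
  rcases le_total q q₀ with h | h
  · exact hs h
  · exact hmin ⟨q, rfl⟩ (hs h)

section hfold

variable {α : Type*} [Add α]

theorem hfold_mono : ∀ n, Monotone (hfold (α := α) n)
  | 0, _, _, h => h
  | 1, _, _, h => h
  | n + 2, _, _, h => add_subset_add (hfold_mono (n + 1) h) h

theorem mem_hfold_succ_iff {k : ℕ} {S : Set α} {x : α} :
    x ∈ hfold (k + 1) S ↔ ∃ f : Fin (k + 1) → α, (∀ i, f i ∈ S) ∧ tupSum k f = x := by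
  induction k generalizing x with
  | zero =>
    refine ⟨fun hx => ⟨fun _ => x, fun _ => hx, rfl⟩, ?_⟩
    rintro ⟨f, hf, rfl⟩
    exact hf 0
  | succ n ih =>
    change x ∈ hfold (n + 1) S + S ↔ _
    constructor
    · rintro ⟨_, ha, b, hb, rfl⟩
      obtain ⟨f, hf, rfl⟩ := ih.1 ha
      refine ⟨Fin.snoc f b, Fin.lastCases (by simpa using hb) fun j => by simpa using hf j, ?_⟩
      simp [tupSum]
    · rintro ⟨f, hf, rfl⟩
      exact ⟨_, ih.2 ⟨fun i => f i.castSucc, fun i => hf _, rfl⟩, _, hf _, rfl⟩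

end hfold

theorem stmt3 {X : Type*} [AddCommSemigroup X] (k : ℕ)
    (hrep : ∀ x : X, {f : Fin (k + 1) → X | tupSum k f = x}.Finite)
    (A : Set X) (Aq : ℕ → Set X)
    (hdec : ∀ q, Aq (q + 1) ⊆ Aq q)
    (hA : A = ⋂ q, Aq q) :
    hfold (k + 1) A = ⋂ q, hfold (k + 1) (Aq q) := by
  subst hA
  refine (subset_iInter fun q => hfold_mono _ (iInter_subset _ q)).antisymm fun x hx => ?_
  have hanti : Antitone Aq := antitone_nat_of_succ_le hdec
  let reps (q : ℕ) : Set (Fin (k + 1) → X) := {f | (∀ i, f i ∈ Aq q) ∧ tupSum k f = x}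
  have hreps_anti : Antitone reps := fun q r hqr f hf => ⟨fun i => hanti hqr (hf.1 i), hf.2⟩
  obtain ⟨f, hf⟩ := nonempty_iInter_of_antitone_of_finite hreps_anti
    ((hrep x).subset fun f hf => hf.2) fun q => mem_hfold_succ_iff.1 (mem_iInter.1 hx q)
  rw [mem_iInter] at hf
  exact mem_hfold_succ_iff.2 ⟨f, fun i => mem_iInter.2 fun q => (hf q).1 i, (hf 0).2⟩
end

section
/- Let s ≥ 1, h₀ ≥ 3, m = (h₀-1)s + 2, and A = {a + m·r : 0 ≤ a ≤ s, r ∈ ℤ} ⊆ ℤ. Then for every h ≥ 1, the h-fold sumset hA equals {a + m·r : 0 ≤ a ≤ h·s, r ∈ ℤ}. -/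
open Pointwise

theorem stmt4 (s : ℤ) (h₀ : ℕ) (hs : 1 ≤ s) (hh₀ : 3 ≤ h₀)
    (m : ℤ) (hm : m = ((h₀ : ℤ) - 1) * s + 2)
    (A : Set ℤ) (hA : A = {x : ℤ | ∃ a r : ℤ, 0 ≤ a ∧ a ≤ s ∧ x = a + m * r}) :
    ∀ h : ℕ, 1 ≤ h →
      hfold h A = {x : ℤ | ∃ a r : ℤ, 0 ≤ a ∧ a ≤ (h : ℤ) * s ∧ x = a + m * r} := by
  intro h hh
  induction h with
  | zero => omega
  | succ n ih =>
    cases n with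
    | zero =>
      rw [show hfold 1 A = A from rfl, hA]
      ext x
      norm_num
    | succ k =>
      have hk : (0 : ℤ) ≤ (k : ℤ) + 1 := by positivity
      have hstep : hfold (k + 2) A = hfold (k + 1) A + A := rfl
      rw [hstep, ih (by omega), hA]
      have hcast : ((k + 1 + 1 : ℕ) : ℤ) = (k : ℤ) + 2 := by push_cast; ring
      have hcast2 : ((k + 1 : ℕ) : ℤ) = (k : ℤ) + 1 := by push_cast; ring
      ext x
      simp only [Set.mem_add, Set.mem_setOf_eq, hcast, hcast2]
      constructor
      · rintro ⟨y, ⟨a₁, r₁, ha₁0, ha₁, rfl⟩, z, ⟨a₂, r₂, ha₂0, ha₂, rfl⟩, rfl⟩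
        refine ⟨a₁ + a₂, r₁ + r₂, by linarith, by nlinarith, by ring⟩
      · rintro ⟨a, r, ha0, ha, rfl⟩
        rcases le_total a (((k : ℤ) + 1) * s) with hle | hge
        · exact ⟨a + m * r, ⟨a, r, ha0, hle, rfl⟩, 0, ⟨0, 0, le_refl 0, by linarith, by ring⟩,
            by ring⟩
        · refine ⟨((k : ℤ) + 1) * s + m * r, ⟨((k : ℤ) + 1) * s, r, by positivity, le_refl _, rfl⟩,
            a - ((k : ℤ) + 1) * s, ⟨a - ((k : ℤ) + 1) * s, 0, by linarith, by nlinarith, by ring⟩,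
            by ring⟩
end

section
/- Let s ≥ 1, h₀ ≥ 3, m = (h₀-1)s + 2, and A = [0,s] + mℤ ⊆ ℤ. Then for every h with 1 ≤ h ≤ h₀ - 1, the set (m-1) + mℤ is disjoint from the h-fold sumset hA. -/
open Pointwise

lemma hfold_sub (s m : ℤ) (A : Set ℤ)
    (hA : A = {x : ℤ | ∃ a r : ℤ, 0 ≤ a ∧ a ≤ s ∧ x = a + m * r}) :
    ∀ h : ℕ, 1 ≤ h →
      hfold h A ⊆ {x : ℤ | ∃ a r : ℤ, 0 ≤ a ∧ a ≤ (h : ℤ) * s ∧ x = a + m * r} := by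
  intro h
  induction h with
  | zero => intro habs; omega
  | succ n ih =>
    intro _
    match n, ih with
    | 0, _ =>
      intro x hx
      rw [show hfold 1 A = A from rfl, hA] at hx
      obtain ⟨a, r, h1, h2, h3⟩ := hx
      exact ⟨a, r, h1, by push_cast; linarith, h3⟩
    | Nat.succ k, ih =>
      intro x hx
      rw [show hfold (k+2) A = hfold (k+1) A + A from rfl] at hx
      obtain ⟨y, hy, z, hz, rfl⟩ := hx
      obtain ⟨a, r, h1, h2, h3⟩ := ih (by omega) hy
      rw [hA] at hz
      obtain ⟨b, t, h4, h5, h6⟩ := hz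
      refine ⟨a + b, r + t, by linarith, by push_cast; push_cast at h2; linarith, by
        rw [h3, h6]; ring⟩

theorem stmt5 (s : ℤ) (h₀ : ℕ) (hs : 1 ≤ s) (hh₀ : 3 ≤ h₀)
    (m : ℤ) (hm : m = ((h₀ : ℤ) - 1) * s + 2)
    (A : Set ℤ) (hA : A = {x : ℤ | ∃ a r : ℤ, 0 ≤ a ∧ a ≤ s ∧ x = a + m * r}) :
    ∀ h : ℕ, 1 ≤ h → h ≤ h₀ - 1 →
      Disjoint {x : ℤ | ∃ r : ℤ, x = (m - 1) + m * r} (hfold h A) := by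
  intro h h1 h2
  rw [Set.disjoint_left]
  intro x hx hx'
  obtain ⟨r, hr⟩ := hx
  obtain ⟨a, t, ha0, ha1, hat⟩ := hfold_sub s m A hA h h1 hx'
  have hhle : (h : ℤ) ≤ (h₀ : ℤ) - 1 := by
    have : (h : ℤ) ≤ ((h₀ - 1 : ℕ) : ℤ) := by exact_mod_cast h2
    omega
  have hale : a ≤ m - 2 := by
    have : (h : ℤ) * s ≤ ((h₀ : ℤ) - 1) * s := by
      apply mul_le_mul_of_nonneg_right hhle (by linarith)
    linarith
  -- a - (m-1) = m*(r - t), so m ∣ a - (m-1), but -(m) < a-(m-1) ≤ -1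
  have hdvd : m * (r - t) = a - (m - 1) := by linarith [hr, hat]
  have hmpos : 0 < m := by nlinarith
  have h1' : a - (m - 1) ≤ -1 := by linarith
  have h2' : -m < a - (m - 1) := by linarith
  rcases lt_trichotomy (r - t) 0 with hlt | heq | hgt
  · nlinarith
  · rw [heq, mul_zero] at hdvd; linarith
  · nlinarith
end

section
/- Let s ≥ 1, h₀ ≥ 3, m = (h₀-1)s + 2, and A = [0,s] + mℤ ⊆ ℤ. Then for every h ≥ h₀, the h-fold sumset hA equals all of ℤ. -/
open Pointwise

lemma hfold_succ_of_pos {α : Type*} [Add α] (k : ℕ) (hk : 1 ≤ k) (S : Set α) :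
    hfold (k + 1) S = hfold k S + S := by
  cases k with
  | zero => omega
  | succ n => rfl

theorem stmt6 (s : ℤ) (h₀ : ℕ) (hs : 1 ≤ s) (hh₀ : 3 ≤ h₀)
    (m : ℤ) (hm : m = ((h₀ : ℤ) - 1) * s + 2)
    (A : Set ℤ) (hA : A = {x : ℤ | ∃ a r : ℤ, 0 ≤ a ∧ a ≤ s ∧ x = a + m * r}) :
    ∀ h : ℕ, h₀ ≤ h → hfold h A = Set.univ := by
  have hh₀' : (3 : ℤ) ≤ (h₀ : ℤ) := by exact_mod_cast hh₀
  have hm_pos : 0 < m := by rw [hm]; nlinarith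
  have mem : ∀ k : ℕ, 1 ≤ k → ∀ a r : ℤ, 0 ≤ a → a ≤ (k : ℤ) * s →
      a + m * r ∈ hfold k A := by
    intro k hk
    induction k, hk using Nat.le_induction with
    | base =>
      intro a r ha has
      simp only [hfold, hA, Set.mem_setOf_eq]
      exact ⟨a, r, ha, by simpa using has, rfl⟩
    | succ k hk ih =>
      intro a r ha hak
      rw [hfold_succ_of_pos k hk A]
      have hks : (0:ℤ) ≤ (k : ℤ) * s := by positivity
      set b : ℤ := max (a - (k : ℤ) * s) 0 with hb
      have hb0 : 0 ≤ b := le_max_right _ _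
      have hbs : b ≤ s := by
        have : a ≤ ((k : ℕ) + 1 : ℤ) * s := by push_cast at hak ⊢; linarith
        simp only [hb, max_le_iff]
        constructor <;> nlinarith
      have ha' : 0 ≤ a - b := by
        simp only [hb]
        rcases le_or_gt (a - (k:ℤ)*s) 0 with h | h
        · rw [max_eq_right h]; linarith
        · rw [max_eq_left h.le]; linarith
      have ha'k : a - b ≤ (k : ℤ) * s := by
        simp only [hb]
        rcases le_or_gt (a - (k:ℤ)*s) 0 with h | h
        · rw [max_eq_right h]; linarith
        · rw [max_eq_left h.le]; linarith
      have hmem1 : (a - b) + m * r ∈ hfold k A := ih (a - b) r ha' ha'k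
      have hmem2 : b ∈ A := by
        rw [hA]; exact ⟨b, 0, hb0, hbs, by ring⟩
      have := Set.add_mem_add hmem1 hmem2
      have heq : (a - b + m * r) + b = a + m * r := by ring
      rwa [heq] at this
  intro h hh
  have hh' : ((h₀ : ℤ)) ≤ (h : ℤ) := by exact_mod_cast hh
  ext x
  simp only [Set.mem_univ, iff_true]
  have hx : x % m + m * (x / m) = x := Int.emod_add_mul_ediv x m
  have h1 : 0 ≤ x % m := Int.emod_nonneg x hm_pos.ne'
  have h2 : x % m < m := Int.emod_lt_of_pos x hm_pos
  have h3 : x % m ≤ (h : ℤ) * s := by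
    have hle : m - 1 ≤ (h : ℤ) * s := by rw [hm]; nlinarith
    omega
  have := mem h (by omega) (x % m) (x / m) h1 h3
  rwa [hx] at this
end

section
/- Let s ≥ 1, h₀ ≥ 3, m = (h₀-1)s + 2, A = [0,s] + mℤ, and for each q ≥ 1 let A_q = A ∪ {m-1+m·r : r ≥ q}. Then for every h ≥ 2, the congruence class (m-1) + mℤ is contained in the intersection over q of the h-fold sumsets hA_q. -/
open Pointwise

lemma mem_hfold_of_zero {S : Set ℤ} (h0 : (0 : ℤ) ∈ S) {x : ℤ}
    (hx : x ∈ S + S) : ∀ n : ℕ, x ∈ hfold (n + 2) S := by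
  intro n
  induction n with
  | zero => exact hx
  | succ k ih =>
      show x ∈ hfold (k + 2) S + S
      exact ⟨x, ih, 0, h0, by ring⟩

theorem stmt8 (s : ℤ) (h₀ : ℕ) (hs : 1 ≤ s) (hh₀ : 3 ≤ h₀)
    (m : ℤ) (hm : m = ((h₀ : ℤ) - 1) * s + 2)
    (A : Set ℤ) (hA : A = {x : ℤ | ∃ a r : ℤ, 0 ≤ a ∧ a ≤ s ∧ x = a + m * r})
    (Aq : ℕ → Set ℤ)
    (hAq : ∀ q, Aq q = A ∪ {x : ℤ | ∃ r : ℤ, (q : ℤ) ≤ r ∧ x = (m - 1) + m * r}) :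
    ∀ h : ℕ, 2 ≤ h →
      {x : ℤ | ∃ r : ℤ, x = (m - 1) + m * r} ⊆ ⋂ q, ⋂ (_ : 1 ≤ q), hfold h (Aq q) := by
  intro h hh x hx
  obtain ⟨r, hr⟩ := hx
  obtain ⟨n, rfl⟩ : ∃ n, h = n + 2 := ⟨h - 2, by omega⟩
  simp only [Set.mem_iInter]
  intro q hq
  apply mem_hfold_of_zero
  · rw [hAq]; left; rw [hA]
    exact ⟨0, 0, le_refl 0, by linarith, by ring⟩
  · refine ⟨(m - 1) + m * q, ?_, m * (r - q), ?_, by rw [hr]; ring⟩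
    · rw [hAq]; right; exact ⟨q, le_refl _, rfl⟩
    · rw [hAq]; left; rw [hA]; exact ⟨0, r - q, le_refl 0, by linarith, by ring⟩
end

section
/- Let s ≥ 1, h₀ ≥ 3, m = (h₀-1)s + 2, A = [0,s] + mℤ, and for each q ≥ 1 let A_q = A ∪ {m-1+m·r : r ≥ q}. Then for every h ≥ h₀ - 1 and every q ≥ 1, the h-fold sumset hA_q equals all of ℤ. -/
open Pointwise

lemma hfold_mono_s9 {S T : Set ℤ} (hST : S ⊆ T) : ∀ n, hfold n S ⊆ hfold n T
  | 0 => hST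
  | 1 => hST
  | n + 2 => Set.add_subset_add (hfold_mono_s9 hST (n + 1)) hST

lemma mem_hfold_A (s m : ℤ) (hs : 1 ≤ s) (A : Set ℤ)
    (hA : A = {x : ℤ | ∃ a r : ℤ, 0 ≤ a ∧ a ≤ s ∧ x = a + m * r}) :
    ∀ h : ℕ, 1 ≤ h → ∀ a r : ℤ, 0 ≤ a → a ≤ (h : ℤ) * s → a + m * r ∈ hfold h A := by
  intro h
  induction h with
  | zero => intro h1; omega
  | succ n ih =>
    intro _ a r ha has
    rcases Nat.eq_zero_or_pos n with hn | hn
    · subst hn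
      rw [show hfold 1 A = A from rfl, hA]
      refine ⟨a, r, ha, ?_, rfl⟩
      push_cast at has; linarith
    · obtain ⟨k, rfl⟩ : ∃ k, n = k + 1 := ⟨n - 1, by omega⟩
      show a + m * r ∈ hfold (k + 1) A + A
      set c : ℤ := max 0 (a - ((k : ℤ) + 1) * s) with hc
      have hns : (0:ℤ) ≤ ((k:ℤ) + 1) * s := by positivity
      have hc0 : 0 ≤ c := le_max_left _ _
      have hcs : c ≤ s := by
        have : a - ((k : ℤ) + 1) * s ≤ s := by push_cast at has; linarith
        simp [hc]; omega
      have hb0 : 0 ≤ a - c := by simp [hc]; omega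
      have hbs : a - c ≤ ((k : ℤ) + 1) * s := by
        rcases le_or_gt (a - ((k : ℤ) + 1) * s) 0 with h' | h'
        · have : c = 0 := by simp [hc]; omega
          omega
        · have : c = a - ((k : ℤ) + 1) * s := by simp [hc]; omega
          omega
      have h1 : (a - c) + m * r ∈ hfold (k + 1) A :=
        ih (by omega) (a - c) r hb0 (by push_cast; linarith)
      have h2 : c ∈ A := by rw [hA]; exact ⟨c, 0, hc0, hcs, by ring⟩
      have : a + m * r = ((a - c) + m * r) + c := by ring
      rw [this]
      exact Set.add_mem_add h1 h2

theorem stmt9 (s : ℤ) (h₀ : ℕ) (hs : 1 ≤ s) (hh₀ : 3 ≤ h₀)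
    (m : ℤ) (hm : m = ((h₀ : ℤ) - 1) * s + 2)
    (A : Set ℤ) (hA : A = {x : ℤ | ∃ a r : ℤ, 0 ≤ a ∧ a ≤ s ∧ x = a + m * r})
    (Aq : ℕ → Set ℤ)
    (hAq : ∀ q, Aq q = A ∪ {x : ℤ | ∃ r : ℤ, (q : ℤ) ≤ r ∧ x = (m - 1) + m * r}) :
    ∀ h : ℕ, h₀ - 1 ≤ h → ∀ q, 1 ≤ q → hfold h (Aq q) = Set.univ := by
  intro h hh q hq
  have hh₀' : ((h₀ : ℤ) - 1) ≤ (h : ℤ) := by omega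
  have hm2 : (2 : ℤ) ≤ m := by
    rw [hm]; nlinarith [hh₀']
  have hmpos : (0 : ℤ) < m := by omega
  have hh2 : 2 ≤ h := by omega
  have hAsub : A ⊆ Aq q := by rw [hAq]; exact Set.subset_union_left
  ext x
  simp only [Set.mem_univ, iff_true]
  have ha0 : 0 ≤ x % m := Int.emod_nonneg x (by omega)
  have ham : x % m < m := Int.emod_lt_of_pos x hmpos
  have hx : x = x % m + m * (x / m) := by
    have := Int.mul_ediv_add_emod x m; omega
  by_cases hcase : x % m ≤ m - 2
  · have hle : x % m ≤ (h : ℤ) * s := by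
      have : m - 2 = ((h₀ : ℤ) - 1) * s := by omega
      nlinarith
    rw [hx]
    exact hfold_mono_s9 hAsub h (mem_hfold_A s m hs A hA h (by omega) (x % m) (x / m) ha0 hle)
  · have ha : x % m = m - 1 := by omega
    obtain ⟨k, rfl⟩ : ∃ k, h = k + 2 := ⟨h - 2, by omega⟩
    show x ∈ hfold (k + 1) (Aq q) + Aq q
    have h1 : (0 : ℤ) + m * (x / m - (q : ℤ)) ∈ hfold (k + 1) A :=
      mem_hfold_A s m hs A hA (k + 1) (by omega) 0 _ le_rfl (by positivity)
    have h2 : (m - 1) + m * (q : ℤ) ∈ Aq q := by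
      rw [hAq]; right; exact ⟨(q : ℤ), le_rfl, rfl⟩
    have hxeq : x = ((0 : ℤ) + m * (x / m - (q : ℤ))) + ((m - 1) + m * (q : ℤ)) := by
      rw [ha] at hx; linear_combination hx
    rw [hxeq]
    exact Set.add_mem_add (hfold_mono_s9 hAsub (k + 1) h1) h2
end

section
/- Let d ≥ 2, let (g_j)_{j≥1} be a strictly increasing sequence of positive integers, let G_q = g_1·g_2···g_q, and for each q ≥ 1 let A_q = {G_r : r ≥ q} ∪ {-(d-1)·G_r : r ≥ q} ⊆ ℤ. If 0 belongs to hA_q for every q ≥ 1, then d divides h. -/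
open Pointwise

/-!
Take `q = h (d - 1)` and write `0` as a sum of `h` terms `e_i G_{r_i}` with `r_i ≥ q` and
`e_i ∈ {1, -(d-1)}`. Grouping the terms by index gives `∑_r c_r G_r = 0` with
`|c_r| ≤ h (d - 1) < g_{r+1}`; since `G_{r+1} = G_r g_{r+1}` divides every `G_t` with `t > r`,
the smallest index with `c_r ≠ 0` would give `g_{r+1} ∣ c_r`, so all `c_r` vanish
(uniqueness of mixed-radix expansions) and `∑ e_i = 0`. As `e_i ≡ 1 (mod d)`, `h ≡ 0 (mod d)`.
-/

open Finset

theorem hfold_eq_nsmul {α : Type*} [AddMonoid α] (S : Set α) : ∀ n, 1 ≤ n → hfold n S = n • S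
  | 1, _ => by rw [hfold, one_nsmul]
  | n + 2, _ => by rw [hfold.eq_3, hfold_eq_nsmul S (n + 1) (by omega), ← succ_nsmul]

theorem coeff_eq_zero_of_sum_mul_eq_zero {G c : ℕ → ℤ} (hdvd : ∀ r t, r ≤ t → G r ∣ G t)
    (s : Finset ℕ) (hG : ∀ r ∈ s, G r ≠ 0) (hc : ∀ r ∈ s, |c r * G r| < |G (r + 1)|)
    (hsum : ∑ r ∈ s, c r * G r = 0) : ∀ r ∈ s, c r = 0 := by
  induction s using Finset.induction_on_min with
  | empty => simp
  | insert a s has ih =>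
    have ha : a ∉ s := fun ha => (has a ha).false
    rw [sum_insert ha] at hsum
    have hdvd_rest : G (a + 1) ∣ ∑ r ∈ s, c r * G r :=
      dvd_sum fun r hr => (hdvd _ _ (has r hr)).mul_left _
    have hlead : c a * G a = 0 := by
      refine Int.eq_zero_of_abs_lt_dvd ((abs_dvd _ _).mpr ?_) (hc a (mem_insert_self a s))
      rw [eq_neg_of_add_eq_zero_left hsum]
      exact hdvd_rest.neg_right
    have hca : c a = 0 :=
      (mul_eq_zero.mp hlead).resolve_right (hG a (mem_insert_self a s))
    rw [hlead, zero_add] at hsum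
    have hrest := ih (fun r hr => hG r (mem_insert_of_mem hr))
      (fun r hr => hc r (mem_insert_of_mem hr)) hsum
    simpa [hca] using hrest

theorem sum_eq_zero_of_sum_mul_eq_zero {ι : Type*} {G : ℕ → ℤ}
    (hdvd : ∀ r t, r ≤ t → G r ∣ G t) (s : Finset ι) (r : ι → ℕ) (e : ι → ℤ)
    (hG : ∀ i ∈ s, G (r i) ≠ 0)
    (hbound : ∀ i ∈ s, (∑ j ∈ s, |e j|) * |G (r i)| < |G (r i + 1)|)
    (hsum : ∑ i ∈ s, e i * G (r i) = 0) : ∑ i ∈ s, e i = 0 := by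
  classical
  set c : ℕ → ℤ := fun t => ∑ i ∈ s with r i = t, e i
  have hmaps : ∀ i ∈ s, r i ∈ s.image r := fun i hi => mem_image_of_mem r hi
  have hgrouped : ∑ t ∈ s.image r, c t * G t = 0 := by
    rw [← hsum, ← sum_fiberwise_of_maps_to hmaps]
    refine sum_congr rfl fun t _ => ?_
    rw [sum_mul]
    exact sum_congr rfl fun i hi => by rw [(mem_filter.mp hi).2]
  have hc : ∀ t ∈ s.image r, c t = 0 := by
    refine coeff_eq_zero_of_sum_mul_eq_zero hdvd _ ?_ ?_ hgrouped
    · simp only [mem_image, forall_exists_index, and_imp]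
      rintro _ i hi rfl
      exact hG i hi
    · simp only [mem_image, forall_exists_index, and_imp]
      rintro _ i hi rfl
      calc |c (r i) * G (r i)| = |c (r i)| * |G (r i)| := abs_mul _ _
        _ ≤ (∑ j ∈ s, |e j|) * |G (r i)| := by
          gcongr
          exact (abs_sum_le_sum_abs _ _).trans
            (sum_le_sum_of_subset_of_nonneg (filter_subset _ _) fun _ _ _ => abs_nonneg _)
        _ < |G (r i + 1)| := hbound i hi
  rw [← sum_fiberwise_of_maps_to hmaps]
  exact sum_eq_zero hc

theorem lt_apply_succ {g : ℕ → ℕ} (hg1 : 0 < g 1) (hgmono : ∀ j, 1 ≤ j → g j < g (j + 1))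
    (r : ℕ) : r < g (r + 1) := by
  have hmono : StrictMono fun j => g (j + 1) :=
    strictMono_nat_of_lt_succ fun j => hgmono (j + 1) (by omega)
  have := hmono.add_le_nat r 0
  simp only [zero_add, add_zero] at this
  omega

theorem sum_eq_zero_of_sum_mul_prod_Icc_eq_zero {ι : Type*} {g : ℕ → ℕ} (hg1 : 0 < g 1)
    (hgmono : ∀ j, 1 ≤ j → g j < g (j + 1)) (s : Finset ι) (r : ι → ℕ) (e : ι → ℤ) {q : ℕ}
    (hqr : ∀ i ∈ s, q ≤ r i) (habs : ∑ i ∈ s, |e i| ≤ q)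
    (hsum : ∑ i ∈ s, e i * ∏ j ∈ Icc 1 (r i), (g j : ℤ) = 0) : ∑ i ∈ s, e i = 0 := by
  set G : ℕ → ℤ := fun r => ∏ j ∈ Icc 1 r, (g j : ℤ)
  have hGpos (r : ℕ) : 0 < G r := prod_pos fun j hj => by
    obtain ⟨k, rfl⟩ := Nat.exists_eq_add_of_le' (mem_Icc.mp hj).1
    exact_mod_cast (Nat.zero_le k).trans_lt (lt_apply_succ hg1 hgmono k)
  refine sum_eq_zero_of_sum_mul_eq_zero (G := G)
    (fun r t hrt => prod_dvd_prod_of_subset _ _ _ (Icc_subset_Icc_right hrt)) s r e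
    (fun i _ => (hGpos _).ne') (fun i hi => ?_) hsum
  calc (∑ j ∈ s, |e j|) * |G (r i)| ≤ q * G (r i) := by rw [abs_of_pos (hGpos _)]; gcongr
    _ < g (r i + 1) * G (r i) := by
      gcongr
      · exact hGpos _
      · exact (hqr i hi).trans_lt (lt_apply_succ hg1 hgmono _)
    _ = |G (r i + 1)| := by
      rw [abs_of_pos (hGpos _), mul_comm]
      exact (prod_Icc_succ_top (by omega) _).symm

theorem stmt13 (d : ℕ) (hd : 2 ≤ d) (g : ℕ → ℕ)
    (hgpos : ∀ j, 1 ≤ j → 0 < g j) (hgmono : ∀ j, 1 ≤ j → g j < g (j + 1))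
    (G : ℕ → ℕ) (hG : ∀ q, G q = ∏ j ∈ Finset.Icc 1 q, g j)
    (Aq : ℕ → Set ℤ)
    (hAq : ∀ q, Aq q = {x : ℤ | ∃ r : ℕ, q ≤ r ∧
      (x = (G r : ℤ) ∨ x = -(((d : ℤ) - 1) * (G r : ℤ)))}) :
    ∀ h : ℕ, 1 ≤ h → (∀ q, 1 ≤ q → (0 : ℤ) ∈ hfold h (Aq q)) → d ∣ h := by
  intro h hh h0
  set q := h * (d - 1) with hq
  have h0q := h0 q (Nat.mul_pos hh (by omega))
  rw [hfold_eq_nsmul _ h hh, hAq] at h0q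
  obtain ⟨f, hf⟩ := Set.mem_nsmul.mp h0q
  have hterm : ∀ i, ∃ r, q ≤ r ∧ ∃ e : ℤ, (e = 1 ∨ e = 1 - d) ∧
      (f i : ℤ) = e * ∏ j ∈ Icc 1 r, (g j : ℤ) := by
    intro i
    obtain ⟨r, hr, hpos | hneg⟩ := (f i).2
    · exact ⟨r, hr, 1, Or.inl rfl, by rw [hpos, hG]; push_cast; ring⟩
    · exact ⟨r, hr, 1 - d, Or.inr rfl, by rw [hneg, hG]; push_cast; ring⟩
  choose r hqr e he hfe using hterm
  have he_abs (i : Fin h) : |e i| ≤ (d : ℤ) - 1 := by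
    rcases he i with he1 | he1 <;> rw [he1, abs_le] <;> constructor <;> omega
  have hsum_e : ∑ i, e i = 0 := by
    refine sum_eq_zero_of_sum_mul_prod_Icc_eq_zero (hgpos 1 le_rfl) hgmono univ r e
      (fun i _ => hqr i) ?_ (by simpa [List.sum_ofFn, ← hfe] using hf)
    calc ∑ i, |e i| ≤ ∑ _i : Fin h, ((d : ℤ) - 1) := sum_le_sum fun i _ => he_abs i
      _ = q := by simp [hq, Nat.cast_sub (by omega : 1 ≤ d)]; ring
  have hdvd : (d : ℤ) ∣ ∑ i, (1 - e i) :=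
    dvd_sum fun i _ => by rcases he i with he1 | he1 <;> simp [he1]
  rw [sum_sub_distrib, hsum_e] at hdvd
  exact Int.natCast_dvd_natCast.mp (by simpa using hdvd)
end

section
/- Let d ≥ 2, let (g_j)_{j≥1} be a strictly increasing sequence of positive integers, let G_q = g_1·g_2···g_q, and for each q ≥ 1 let A_q = {G_r : r ≥ q} ∪ {-(d-1)·G_r : r ≥ q} ⊆ ℤ. Then for every h ≥ 1, no nonzero integer belongs to the intersection over q of hA_q. -/
open Pointwise

lemma hfold_dvd (m : ℤ) : ∀ (h : ℕ) (S : Set ℤ), (∀ x ∈ S, m ∣ x) →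
    ∀ x ∈ hfold h S, m ∣ x := by
  intro h
  induction h with
  | zero => intro S hS x hx; exact hS x hx
  | succ n ih =>
    cases n with
    | zero => intro S hS x hx; exact hS x hx
    | succ k =>
      intro S hS x hx
      rw [show hfold (k+2) S = hfold (k+1) S + S from rfl, Set.mem_add] at hx
      obtain ⟨a, ha, b, hb, rfl⟩ := hx
      exact dvd_add (ih S hS a ha) (hS b hb)

theorem stmt14 (d : ℕ) (hd : 2 ≤ d) (g : ℕ → ℕ)
    (hgpos : ∀ j, 1 ≤ j → 0 < g j) (hgmono : ∀ j, 1 ≤ j → g j < g (j + 1))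
    (G : ℕ → ℕ) (hG : ∀ q, G q = ∏ j ∈ Finset.Icc 1 q, g j)
    (Aq : ℕ → Set ℤ)
    (hAq : ∀ q, Aq q = {x : ℤ | ∃ r : ℕ, q ≤ r ∧
      (x = (G r : ℤ) ∨ x = -(((d : ℤ) - 1) * (G r : ℤ)))}) :
    ∀ h : ℕ, 1 ≤ h → ∀ n : ℤ, n ≠ 0 → n ∉ ⋂ q, ⋂ (_ : 1 ≤ q), hfold h (Aq q) := by
  intro h hh n hn hmem
  -- g j ≥ j
  have hgge : ∀ j, 1 ≤ j → j ≤ g j := by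
    intro j hj
    induction j with
    | zero => omega
    | succ k ih =>
      rcases Nat.lt_or_ge 1 (k+1) with h1 | h1
      · have hk : 1 ≤ k := by omega
        have := hgmono k hk
        have := ih hk
        omega
      · have : k + 1 = 1 := by omega
        rw [this]; exact hgpos 1 le_rfl
  -- G q ≥ q for q ≥ 1
  have hGge : ∀ q, 1 ≤ q → q ≤ G q := by
    intro q hq
    rw [hG]
    calc q ≤ g q := hgge q hq
    _ ≤ ∏ j ∈ Finset.Icc 1 q, g j := by
        apply Finset.single_le_prod'
        · intro j hj; exact hgpos j (Finset.mem_Icc.mp hj).1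
        · exact Finset.mem_Icc.mpr ⟨hq, le_rfl⟩
  -- G q divides G r for q ≤ r
  have hGdvd : ∀ q r, q ≤ r → G q ∣ G r := by
    intro q r hqr
    rw [hG, hG]
    refine ⟨∏ j ∈ Finset.Ioc q r, g j, ?_⟩
    have h0q : (0:ℕ) ≤ q := Nat.zero_le q
    rw [show Finset.Icc 1 q = Finset.Ioc 0 q from (Finset.Icc_add_one_left_eq_Ioc 0 q).symm,
        show Finset.Icc 1 r = Finset.Ioc 0 r from (Finset.Icc_add_one_left_eq_Ioc 0 r).symm]
    exact (Finset.prod_Ioc_consecutive g h0q hqr).symm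
  -- every element of Aq q is divisible by G q
  have hAdvd : ∀ q, ∀ x ∈ Aq q, (G q : ℤ) ∣ x := by
    intro q x hx
    rw [hAq] at hx
    obtain ⟨r, hqr, hx | hx⟩ := hx
    · rw [hx]; exact_mod_cast Int.natCast_dvd_natCast.mpr (hGdvd q r hqr)
    · rw [hx]
      exact (Int.natCast_dvd_natCast.mpr (hGdvd q r hqr)).mul_left _ |>.neg_right
  -- pick q large
  set q := n.natAbs + 1 with hqdef
  have hq1 : 1 ≤ q := by omega
  have hnq : n ∈ hfold h (Aq q) := by
    have := Set.mem_iInter.mp hmem q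
    exact Set.mem_iInter.mp this hq1
  have hdvd : (G q : ℤ) ∣ n := hfold_dvd (G q) h (Aq q) (hAdvd q) n hnq
  have hle : (G q : ℤ) ≤ |n| := Int.le_of_dvd (abs_pos.mpr hn) ((dvd_abs _ _).mpr hdvd)
  have : (q : ℤ) ≤ |n| := le_trans (by exact_mod_cast hGge q hq1) hle
  rw [Int.abs_eq_natAbs] at this
  omega
end

section
/- For every h₀ ≥ 2 there exists a strictly decreasing sequence (A_q) of sets of integers with intersection A such that hA equals ⋂_q hA_q for all h ∈ {1, ..., h₀-1}, but h₀A ≠ ⋂_q h₀A_q. -/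
/-!
Take `A_q = {0} ∪ {x : h₀ x ≡ 1 [ZMOD (h₀ + 1)^(q+1)]}`, so that `⋂ A_q = {0}`. If `x` is a sum of
`h < h₀` elements of `A_q`, then `h₀ x ≡ k` for the number `k ≤ h` of nonzero summands; as the
moduli grow this forces `h₀ x = k`, hence `x = 0`. On the other hand, for an inverse `y` of `h₀`
the `h₀` elements `y, …, y, 1 - (h₀ - 1) y` of `A_q` sum to `1`, so `1 ∈ ⋂ h₀ A_q`.
Since `h₀ ∣ (h₀ + 1)^(q+1) - 1`, such a `y` exists with `h₀ y = 1 - (h₀ + 1)^(q+1)`, and it lies in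
`A_q \ A_{q+1}`.
-/

open Pointwise

theorem hfold_singleton_zero {α : Type*} [AddZeroClass α] :
    ∀ h : ℕ, hfold h ({0} : Set α) = {0}
  | 0 => rfl
  | 1 => rfl
  | n + 2 => by
    rw [hfold, hfold_singleton_zero (n + 1), Set.singleton_add_singleton, add_zero]

theorem add_nsmul_mem_hfold {α : Type*} [AddMonoid α] {S : Set α} {y z : α}
    (hy : y ∈ S) (hz : z ∈ S) : ∀ n : ℕ, z + n • y ∈ hfold (n + 1) S
  | 0 => by simpa [hfold] using hz
  | n + 1 => by
    rw [succ_nsmul, ← add_assoc]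
    exact Set.add_mem_add (add_nsmul_mem_hfold hy hz n) hy

def invModOrZero (a m : ℤ) : Set ℤ := insert 0 {x | a * x ≡ 1 [ZMOD m]}

theorem invModOrZero_subset_of_dvd {a m m' : ℤ} (hm : m ∣ m') :
    invModOrZero a m' ⊆ invModOrZero a m :=
  Set.insert_subset_insert fun _ hx => Int.ModEq.of_dvd hm hx

theorem exists_modEq_of_mem_hfold {a m : ℤ} :
    ∀ {h : ℕ} {x : ℤ}, x ∈ hfold (h + 1) (invModOrZero a m) →
      ∃ k : ℕ, k ≤ h + 1 ∧ a * x ≡ k [ZMOD m]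
  | 0, x, hx => by
    rcases hx with rfl | hx
    · exact ⟨0, by simp, by simp [Int.ModEq.refl]⟩
    · exact ⟨1, le_rfl, by simpa using hx⟩
  | h + 1, _, ⟨y, hy, s, hs, rfl⟩ => by
    obtain ⟨k, hk, hyk⟩ := exists_modEq_of_mem_hfold hy
    rcases hs with rfl | hs
    · exact ⟨k, by omega, by simpa using hyk⟩
    · refine ⟨k + 1, by omega, ?_⟩
      rw [mul_add, Nat.cast_succ]
      exact hyk.add hs

theorem eq_zero_of_forall_mem_hfold {a N x : ℤ} {h : ℕ} (hN : 1 < N) (hha : (h : ℤ) + 1 < a)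
    (hx : ∀ q : ℕ, x ∈ hfold (h + 1) (invModOrZero a (N ^ (q + 1)))) : x = 0 := by
  obtain ⟨q, hq⟩ := pow_unbounded_of_one_lt (|a * x| + a) hN
  obtain ⟨k, hk, hxk⟩ := exists_modEq_of_mem_hfold (hx q)
  have hk' : (k : ℤ) ≤ h + 1 := by exact_mod_cast hk
  have hlt : |(k : ℤ) - a * x| < N ^ (q + 1) := calc
    |(k : ℤ) - a * x| ≤ k + |a * x| := by
      simpa using abs_sub (k : ℤ) (a * x)
    _ < N ^ q := by linarith
    _ ≤ N ^ (q + 1) := pow_le_pow_right₀ hN.le q.le_succ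
  have hax : a * x = k := by
    linarith [Int.eq_zero_of_abs_lt_dvd (Int.modEq_iff_dvd.mp hxk) hlt]
  rcases lt_trichotomy x 0 with hneg | hzero | hpos
  · nlinarith
  · exact hzero
  · nlinarith

theorem exists_mul_eq_one_sub_pow (a : ℤ) (n : ℕ) : ∃ y, a * y = 1 - (a + 1) ^ n := by
  obtain ⟨y, hy⟩ := sub_dvd_pow_sub_pow (a + 1) 1 n
  exact ⟨-y, by rw [one_pow, add_sub_cancel_right] at hy; linarith⟩

theorem mul_modEq_one_of_eq_one_sub {a y m : ℤ} (h : a * y = 1 - m) : a * y ≡ 1 [ZMOD m] :=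
  Int.modEq_iff_dvd.mpr ⟨1, by linarith⟩

theorem invModOrZero_pow_ssubset {a : ℤ} (ha : 0 < a) (q : ℕ) :
    invModOrZero a ((a + 1) ^ (q + 2)) ⊂ invModOrZero a ((a + 1) ^ (q + 1)) := by
  refine (Set.ssubset_iff_of_subset
    (invModOrZero_subset_of_dvd (pow_dvd_pow _ q.succ.le_succ))).mpr ?_
  obtain ⟨y, hy⟩ := exists_mul_eq_one_sub_pow a (q + 1)
  have hN : 1 < a + 1 := by linarith
  have hpow : 1 < (a + 1) ^ (q + 1) := one_lt_pow₀ hN q.succ_ne_zero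
  refine ⟨y, Or.inr (mul_modEq_one_of_eq_one_sub hy), ?_⟩
  rintro (hy0 | hdvd)
  · rw [hy0, mul_zero] at hy
    linarith
  · rw [Set.mem_ofPred_eq, Int.modEq_iff_dvd, show 1 - a * y = (a + 1) ^ (q + 1) by linarith,
      pow_dvd_pow_iff (by positivity) (by rw [Int.isUnit_iff]; omega)] at hdvd
    omega

theorem one_mem_hfold_invModOrZero {m y : ℤ} (n : ℕ) (hy : ((n + 1 : ℕ) : ℤ) * y ≡ 1 [ZMOD m]) :
    1 ∈ hfold (n + 1) (invModOrZero ((n + 1 : ℕ) : ℤ) m) := by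
  have hz : ((n + 1 : ℕ) : ℤ) * (1 - n * y) ≡ 1 [ZMOD m] := calc
    ((n + 1 : ℕ) : ℤ) * (1 - n * y) = (n + 1) - n * (((n + 1 : ℕ) : ℤ) * y) := by push_cast; ring
    _ ≡ (n + 1) - n * 1 [ZMOD m] := (Int.ModEq.refl _).sub (hy.mul_left _)
    _ = 1 := by ring
  simpa using add_nsmul_mem_hfold (S := invModOrZero _ m) (Or.inr hy) (Or.inr hz) n

theorem stmt19 (h₀ : ℕ) (hh₀ : 2 ≤ h₀) :
    ∃ Aq : ℕ → Set ℤ,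
      (∀ q, Aq (q + 1) ⊂ Aq q) ∧
      (∀ h : ℕ, 1 ≤ h → h ≤ h₀ - 1 →
        hfold h (⋂ q, Aq q) = ⋂ q, hfold h (Aq q)) ∧
      hfold h₀ (⋂ q, Aq q) ≠ ⋂ q, hfold h₀ (Aq q) := by
  set A : ℕ → Set ℤ := fun q => invModOrZero h₀ ((h₀ + 1) ^ (q + 1))
  have hN : (1 : ℤ) < h₀ + 1 := by omega
  have hA : ⋂ q, A q = {0} := by
    refine subset_antisymm (fun x hx => ?_) (by simp [A, invModOrZero])
    exact eq_zero_of_forall_mem_hfold (h := 0) hN (by omega) (Set.mem_iInter.mp hx)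
  refine ⟨A, fun q => invModOrZero_pow_ssubset (by omega) q, fun h h1 h2 => ?_, ?_⟩
  · obtain ⟨h, rfl⟩ : ∃ h', h = h' + 1 := ⟨h - 1, by omega⟩
    rw [hA, hfold_singleton_zero]
    refine subset_antisymm (Set.singleton_subset_iff.mpr (Set.mem_iInter.mpr fun q => ?_))
      fun x hx => eq_zero_of_forall_mem_hfold hN (by omega) (Set.mem_iInter.mp hx)
    simpa using add_nsmul_mem_hfold (S := A q) (Or.inl rfl) (Or.inl rfl) h
  · rw [hA, hfold_singleton_zero]
    intro heq
    obtain ⟨n, rfl⟩ : ∃ n, h₀ = n + 1 := ⟨h₀ - 1, by omega⟩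
    suffices (1 : ℤ) ∈ ⋂ q, hfold (n + 1) (A q) by simp [← heq] at this
    refine Set.mem_iInter.mpr fun q => ?_
    obtain ⟨y, hy⟩ := exists_mul_eq_one_sub_pow ((n + 1 : ℕ) : ℤ) (q + 1)
    exact one_mem_hfold_invModOrZero n (mul_modEq_one_of_eq_one_sub hy)
end
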